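/- arXiv:1908.06906 — 4 statements merged into one kernel-verified Lean document; each statement's English description precedes it below -/
import Mathlib

section
/- Fix n ∈ ℕ. The polynomial function j ↦ e_i(1,…,1 (n-j times), -1,…,-1 (j times)), i.e. C_i(j) = ∑_{k=0}^{i} C(n-j,i-k)(-1)^k C(j,k) viewed as a rational polynomial in j, has degree exactly i, i.e. the coefficient of j^i is nonzero, for 0 ≤ i ≤ n. -/
open Polynomial

/-- The polynomial `C_i(x) = ∑_{k=0}^{i} C(n-x, i-k) * (-1)^k * C(x,k)` in `ℚ[x]`,
with binomial coefficients extended polynomially via falling factorials: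
`C(y,k) = y(y-1)⋯(y-k+1)/k!`. -/
noncomputable def Cpoly (n i : ℕ) : Polynomial ℚ :=
  ∑ k ∈ Finset.range (i + 1),
    (((-1 : ℚ) ^ k / ((i - k).factorial * k.factorial : ℚ)) •
      ((∏ ℓ ∈ Finset.range (i - k), ((C (n : ℚ) - X) - C (ℓ : ℚ))) *
        ∏ ℓ ∈ Finset.range k, (X - C (ℓ : ℚ))))

/-!
Each summand of `C_i` is `(-1)^k / ((i-k)! k!)` times a product of `i` linear factors, `i - k` of
them with leading coefficient `-1` and `k` of them monic. So every summand has degree at most `i`,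
and the coefficient of `x^i` is `∑_k (-1)^i / ((i-k)! k!) = (-1)^i 2^i / i!`, which is nonzero.
-/

section LinearFactors

variable {R : Type*} [CommRing R]

theorem C_sub_X_sub_C_eq_neg (a b : R) : C a - X - C b = -(X - C (a - b)) := by
  rw [C_sub]; ring

variable [IsDomain R]

theorem natDegree_prod_C_sub_X_sub_C {ι : Type*} (s : Finset ι) (a : R) (b : ι → R) :
    (∏ ℓ ∈ s, (C a - X - C (b ℓ))).natDegree = s.card := by
  simp only [C_sub_X_sub_C_eq_neg]
  rw [natDegree_prod _ _ fun ℓ _ => neg_ne_zero.mpr (X_sub_C_ne_zero _)]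
  simp only [natDegree_neg, natDegree_X_sub_C, Finset.sum_const, smul_eq_mul, mul_one]

theorem leadingCoeff_prod_C_sub_X_sub_C {ι : Type*} (s : Finset ι) (a : R) (b : ι → R) :
    (∏ ℓ ∈ s, (C a - X - C (b ℓ))).leadingCoeff = (-1) ^ s.card := by
  simp only [C_sub_X_sub_C_eq_neg, leadingCoeff_prod, leadingCoeff_neg, leadingCoeff_X_sub_C,
    Finset.prod_const]

theorem natDegree_prod_X_sub_C {ι : Type*} (s : Finset ι) (b : ι → R) :
    (∏ ℓ ∈ s, (X - C (b ℓ))).natDegree = s.card := by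
  rw [natDegree_prod _ _ fun ℓ _ => X_sub_C_ne_zero _]
  simp

variable (a : R) (b c : ℕ → R) {i k : ℕ}

theorem natDegree_prod_range_C_sub_X_sub_C_mul (hk : k ≤ i) :
    ((∏ ℓ ∈ Finset.range (i - k), (C a - X - C (b ℓ))) *
      ∏ ℓ ∈ Finset.range k, (X - C (c ℓ))).natDegree = i := by
  have hne : (∏ ℓ ∈ Finset.range (i - k), (C a - X - C (b ℓ))) ≠ 0 := by
    rw [← leadingCoeff_ne_zero, leadingCoeff_prod_C_sub_X_sub_C]
    exact pow_ne_zero _ (neg_ne_zero.mpr one_ne_zero)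
  rw [natDegree_mul hne (monic_prod_X_sub_C c _).ne_zero,
    natDegree_prod_C_sub_X_sub_C, natDegree_prod_X_sub_C, Finset.card_range, Finset.card_range]
  omega

theorem coeff_prod_range_C_sub_X_sub_C_mul (hk : k ≤ i) :
    ((∏ ℓ ∈ Finset.range (i - k), (C a - X - C (b ℓ))) *
      ∏ ℓ ∈ Finset.range k, (X - C (c ℓ))).coeff i = (-1) ^ (i - k) := by
  calc _ = leadingCoeff _ := by
        rw [← coeff_natDegree, natDegree_prod_range_C_sub_X_sub_C_mul a b c hk]
    _ = _ := by
      rw [leadingCoeff_mul, leadingCoeff_prod_C_sub_X_sub_C, (monic_prod_X_sub_C c _).leadingCoeff,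
        Finset.card_range, mul_one]

end LinearFactors

theorem natDegree_Cpoly_le (n i : ℕ) : (Cpoly n i).natDegree ≤ i := by
  refine natDegree_sum_le_of_forall_le _ _ fun k hk => (natDegree_smul_le _ _).trans ?_
  rw [natDegree_prod_range_C_sub_X_sub_C_mul _ _ _ (Nat.lt_succ_iff.mp (Finset.mem_range.mp hk))]

theorem coeff_Cpoly_self (n i : ℕ) :
    (Cpoly n i).coeff i = (-1) ^ i * 2 ^ i / i.factorial := by
  have hterm : ∀ k ∈ Finset.range (i + 1),
      (-1 : ℚ) ^ k / ((i - k).factorial * k.factorial) * (-1) ^ (i - k)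
        = (-1) ^ i * i.choose k / i.factorial := fun k hk => by
    have hki := Nat.lt_succ_iff.mp (Finset.mem_range.mp hk)
    have hfac : (i.choose k * k.factorial * (i - k).factorial : ℚ) = i.factorial := by
      exact_mod_cast Nat.choose_mul_factorial_mul_factorial hki
    have hchoose : (i.choose k : ℚ) ≠ 0 := by exact_mod_cast (Nat.choose_pos hki).ne'
    rw [div_mul_eq_mul_div, ← pow_add, Nat.add_sub_cancel' hki, ← hfac]
    field_simp
  rw [Cpoly, finsetSum_coeff]
  simp only [coeff_smul, smul_eq_mul]
  rw [Finset.sum_congr rfl fun k hk => by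
      rw [coeff_prod_range_C_sub_X_sub_C_mul _ _ _ (Nat.lt_succ_iff.mp (Finset.mem_range.mp hk)),
        hterm k hk],
    ← Finset.sum_div, ← Finset.mul_sum]
  exact_mod_cast congrArg (fun m : ℕ => (-1 : ℚ) ^ i * m / i.factorial) (Nat.sum_range_choose i)

theorem stmt_4_general (n i : ℕ) :
    (Cpoly n i).coeff i ≠ 0 ∧ (Cpoly n i).natDegree = i := by
  have hcoeff : (Cpoly n i).coeff i ≠ 0 := by
    rw [coeff_Cpoly_self]
    positivity
  exact ⟨hcoeff, (natDegree_Cpoly_le n i).antisymm (le_natDegree_of_ne_zero hcoeff)⟩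

/-- Fix `n`. For `0 ≤ i ≤ n`, the rational polynomial `j ↦ C_i(j)`, i.e. the expansion of
`e_i(1,…,1 (n-j times), -1,…,-1 (j times))`, has degree exactly `i`: the coefficient of
`j^i` is nonzero. -/
theorem stmt_4 (n i : ℕ) (hi : i ≤ n) :
    (Cpoly n i).coeff i ≠ 0 ∧ (Cpoly n i).natDegree = i :=
  stmt_4_general n i
end

section
/- Let n ≥ 1, let P be a finite set, let q : P → {0,1,…,n}, and let σ : P → {1,-1}. Suppose that for every i with 0 ≤ i ≤ n-1, ∑_{p∈P} σ(p) (-1)^{q(p)} e_i(1,…,1 (n-q(p) times), -1,…,-1 (q(p) times)) = 0, where e_i is the i-th elementary symmetric polynomial in n variables. Then for every i with 0 ≤ i ≤ n-1, ∑_{p∈P} σ(p) (-1)^{q(p)} q(p)^i = 0. -/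
/-!
With `m` of the `n` entries equal to `-1` and the rest equal to `1`, expanding `e_i` gives
`e_i = ∑_{a+b=i} (-1)^b C(n-m, a) C(m, b)`, a polynomial in `m` of degree `i` with leading
coefficient `(-2)^i / i!`. So the ABBV identities say that the linear functional
`f ↦ ∑_p σ(p) (-1)^{q(p)} f(q(p))` kills a triangular basis of the polynomials of degree `< n`;
by induction on the degree it then kills each monomial `X^i` with `i < n`.
-/

open Polynomial Finset Nat

section Esymm

variable {R : Type*} [CommSemiring R]

theorem Multiset.esymm_zero_right (s : Multiset R) : s.esymm 0 = 1 := by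
  simp [esymm]

theorem Multiset.esymm_cons_succ (x : R) (s : Multiset R) (k : ℕ) :
    (x ::ₘ s).esymm (k + 1) = s.esymm (k + 1) + x * s.esymm k := by
  simp [esymm, powersetCard_cons, map_map, sum_map_mul_left]

theorem Multiset.esymm_add (s t : Multiset R) (k : ℕ) :
    (s + t).esymm k = ∑ x ∈ HasAntidiagonal.antidiagonal k, s.esymm x.1 * t.esymm x.2 := by
  induction s using Multiset.induction_on generalizing k with
  | empty =>
    rw [zero_add, sum_eq_single (0, k)]
    · simp [esymm_zero_right]
    · rintro ⟨_ | a, b⟩ hx hne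
      · simp_all
      · simp [esymm, powersetCard_zero_right]
    · simp
  | cons x s ih =>
    cases k with
    | zero => simp [esymm_zero_right]
    | succ k =>
      rw [cons_add, esymm_cons_succ, ih, ih, Nat.sum_antidiagonal_succ, Nat.sum_antidiagonal_succ]
      simp only [esymm_zero_right, esymm_cons_succ, add_mul, sum_add_distrib, mul_sum, mul_assoc]
      ring

theorem Multiset.esymm_replicate (b : ℕ) (x : R) (k : ℕ) :
    (replicate b x).esymm k = b.choose k * x ^ k := by
  induction b generalizing k with
  | zero => cases k <;> simp [esymm, powersetCard_zero_right]
  | succ b ih =>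
    cases k with
    | zero => simp [esymm_zero_right]
    | succ k =>
      rw [replicate_succ, esymm_cons_succ, ih, ih, Nat.choose_succ_succ']
      push_cast
      ring

end Esymm

section ChoosePoly

variable {K : Type*} [Field K]

variable (K) in
noncomputable def choosePoly (k : ℕ) : K[X] := C (k ! : K)⁻¹ * descPochhammer K k

theorem leadingCoeff_choosePoly (k : ℕ) : (choosePoly K k).leadingCoeff = (k ! : K)⁻¹ := by
  rw [choosePoly, leadingCoeff_mul, leadingCoeff_C, (monic_descPochhammer K k).leadingCoeff,
    mul_one]

theorem C_sub_X_eq_neg (c : K) : C c - X = -(X - C c) := by ring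

theorem natDegree_C_sub_X (c : K) : (C c - X).natDegree = 1 := by
  rw [C_sub_X_eq_neg, natDegree_neg, natDegree_X_sub_C]

theorem leadingCoeff_C_sub_X (c : K) : (C c - X).leadingCoeff = -1 := by
  rw [C_sub_X_eq_neg, leadingCoeff_neg, leadingCoeff_X_sub_C]

variable [CharZero K]

theorem choosePoly_eval_natCast (a k : ℕ) : (choosePoly K k).eval (a : K) = a.choose k := by
  rw [choosePoly, eval_mul, eval_C, Nat.cast_choose_eq_descPochhammer_div, inv_mul_eq_div]

theorem natDegree_choosePoly (k : ℕ) : (choosePoly K k).natDegree = k := by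
  rw [choosePoly, natDegree_C_mul (inv_ne_zero (cast_ne_zero.2 k.factorial_ne_zero)),
    descPochhammer_natDegree]

theorem natDegree_choosePoly_comp_C_sub_X (c : K) (k : ℕ) :
    ((choosePoly K k).comp (C c - X)).natDegree = k := by
  rw [natDegree_comp, natDegree_choosePoly, natDegree_C_sub_X, mul_one]

theorem leadingCoeff_choosePoly_comp_C_sub_X (c : K) (k : ℕ) :
    ((choosePoly K k).comp (C c - X)).leadingCoeff = (-1) ^ k * (k ! : K)⁻¹ := by
  rw [leadingCoeff_comp (by rw [natDegree_C_sub_X]; exact one_ne_zero), leadingCoeff_choosePoly,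
    leadingCoeff_C_sub_X, natDegree_choosePoly, mul_comm]

end ChoosePoly

section EsymmSignPoly

variable (K : Type*) [Field K] [CharZero K]

noncomputable def esymmSignPoly (n i : ℕ) : K[X] :=
  ∑ x ∈ antidiagonal i,
    C ((-1) ^ x.2) * ((choosePoly K x.1).comp (C (n : K) - X) * choosePoly K x.2)

variable {K}

theorem natDegree_esymmSignPoly_le (n i : ℕ) : (esymmSignPoly K n i).natDegree ≤ i := by
  refine natDegree_sum_le_of_forall_le _ _ fun x hx => ?_
  refine (natDegree_C_mul_le _ _).trans (natDegree_mul_le.trans ?_)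
  rw [natDegree_choosePoly_comp_C_sub_X, natDegree_choosePoly, mem_antidiagonal.1 hx]

theorem coeff_esymmSignPoly_self (n i : ℕ) : (esymmSignPoly K n i).coeff i = (-2) ^ i / i ! := by
  have hterm : ∀ x ∈ antidiagonal i, (C ((-1 : K) ^ x.2) *
      ((choosePoly K x.1).comp (C (n : K) - X) * choosePoly K x.2)).coeff i
        = (-1) ^ i * (i.choose x.1 / i ! : K) := by
    rintro ⟨a, b⟩ hx
    obtain rfl : a + b = i := mem_antidiagonal.1 hx
    have := coeff_mul_degree_add_degree ((choosePoly K a).comp (C (n : K) - X)) (choosePoly K b)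
    rw [natDegree_choosePoly_comp_C_sub_X, natDegree_choosePoly,
      leadingCoeff_choosePoly_comp_C_sub_X, leadingCoeff_choosePoly] at this
    have hfact : ((a + b)! : K) ≠ 0 := cast_ne_zero.2 (factorial_ne_zero _)
    rw [coeff_C_mul, this, Nat.cast_add_choose, pow_add]
    field_simp
  rw [esymmSignPoly, finsetSum_coeff, sum_congr rfl hterm, ← mul_sum, ← sum_div]
  have hsum : ∑ x ∈ antidiagonal i, (i.choose x.1 : K) = 2 ^ i := by
    simpa [one_add_one_eq_two] using ((Commute.one_left (1 : K)).add_pow' i).symm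
  rw [hsum, neg_pow (2 : K), mul_div_assoc]

theorem esymmSignPoly_eval_natCast {n m : ℕ} (hm : m ≤ n) (i : ℕ) :
    (esymmSignPoly K n i).eval (m : K)
      = (Multiset.replicate (n - m) (1 : K) + Multiset.replicate m (-1)).esymm i := by
  rw [esymmSignPoly, eval_finsetSum, Multiset.esymm_add]
  refine sum_congr rfl fun x _ => ?_
  simp only [eval_mul, eval_C, eval_comp, eval_sub, eval_X, ← Nat.cast_sub hm,
    choosePoly_eval_natCast, Multiset.esymm_replicate, one_pow]
  ring

end EsymmSignPoly

theorem LinearMap.map_X_pow_eq_zero_of_triangular {K M : Type*} [Field K] [AddCommGroup M]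
    [Module K M] (L : K[X] →ₗ[K] M) (Q : ℕ → K[X]) {n : ℕ}
    (hdeg : ∀ i < n, (Q i).natDegree ≤ i) (hcoeff : ∀ i < n, (Q i).coeff i ≠ 0)
    (hL : ∀ i < n, L (Q i) = 0) : ∀ i < n, L (X ^ i) = 0 := by
  intro i
  induction i using Nat.strong_induction_on with
  | _ i ih =>
    intro hi
    have hexpand : L (Q i) = ∑ k ∈ Finset.range (i + 1), (Q i).coeff k • L (X ^ k) := by
      conv_lhs => rw [(Q i).as_sum_range_C_mul_X_pow' (Nat.lt_succ_of_le (hdeg i hi))]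
      simp only [map_sum, C_mul', map_smul]
    have hlower : ∑ k ∈ Finset.range i, (Q i).coeff k • L (X ^ k) = 0 :=
      sum_eq_zero fun k hk => by
        rw [ih k (Finset.mem_range.1 hk) ((Finset.mem_range.1 hk).trans hi), smul_zero]
    rw [sum_range_succ, hlower, zero_add, hL i hi] at hexpand
    exact (smul_eq_zero.1 hexpand.symm).resolve_left (hcoeff i hi)

theorem stmt_7_general (n : ℕ) (P : Type*) [Fintype P]
    (q : P → ℕ) (hq : ∀ p, q p ≤ n) (σ : P → ℤ)
    (habbv : ∀ i < n, ∑ p : P, (σ p : ℚ) * (-1 : ℚ) ^ (q p) *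
      (Multiset.replicate (n - q p) (1 : ℚ) + Multiset.replicate (q p) (-1 : ℚ)).esymm i = 0) :
    ∀ i < n, ∑ p : P, (σ p : ℚ) * (-1 : ℚ) ^ (q p) * (q p : ℚ) ^ i = 0 := by
  let L : ℚ[X] →ₗ[ℚ] ℚ := ∑ p, ((σ p : ℚ) * (-1) ^ q p) • leval (q p : ℚ)
  have hL : ∀ f, L f = ∑ p, (σ p : ℚ) * (-1) ^ q p * f.eval (q p : ℚ) := by
    intro f
    simp [L]
  intro i hi
  simpa [hL] using L.map_X_pow_eq_zero_of_triangular (esymmSignPoly ℚ n)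
    (fun i _ => natDegree_esymmSignPoly_le n i)
    (fun i _ => by simp [coeff_esymmSignPoly_self, factorial_ne_zero])
    (fun i hi => by simpa only [hL, esymmSignPoly_eval_natCast (hq _)] using habbv i hi) i hi

/-- Let `n ≥ 1`, `P` a finite set, `q : P → {0,…,n}`, `σ : P → {±1}`. If for every
`0 ≤ i ≤ n-1` the ABBV identity
`∑_{p∈P} σ(p) (-1)^{q(p)} e_i(1,…,1 (n-q(p) times), -1,…,-1 (q(p) times)) = 0` holds,
then `∑_{p∈P} σ(p) (-1)^{q(p)} q(p)^i = 0` for every `0 ≤ i ≤ n-1`. -/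
theorem stmt_7 (n : ℕ) (hn : 1 ≤ n) (P : Type*) [Fintype P]
    (q : P → ℕ) (hq : ∀ p, q p ≤ n) (σ : P → ℤ) (hσ : ∀ p, σ p = 1 ∨ σ p = -1)
    (habbv : ∀ i < n, ∑ p : P, (σ p : ℚ) * (-1 : ℚ) ^ (q p) *
      (Multiset.replicate (n - q p) (1 : ℚ) + Multiset.replicate (q p) (-1 : ℚ)).esymm i = 0) :
    ∀ i < n, ∑ p : P, (σ p : ℚ) * (-1 : ℚ) ^ (q p) * (q p : ℚ) ^ i = 0 :=
  stmt_7_general n P q hq σ habbv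
end

section
/- Let n ≥ 1, let P be a finite set, q : P → {0,…,n}, σ : P → {±1}, and define m_j = |{p : σ(p)=1, q(p)=j}| − |{p : σ(p)=−1, q(p)=j}| ∈ ℤ. If ∑_{p∈P} σ(p)(-1)^{q(p)} q(p)^i = 0 for all 0 ≤ i ≤ n-1, then m_j = C(n,j) m_0 for all 0 ≤ j ≤ n. -/
open Finset Polynomial

private lemma prod_Icc_one_factorial (n : ℕ) : ∏ i ∈ Finset.Icc 1 n, i = n.factorial := by
  induction n with
  | zero => simp
  | succ n ih => rw [← Finset.Ico_add_one_right_eq_Icc, Finset.prod_Ico_succ_top (by omega), Finset.Ico_add_one_right_eq_Icc,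
      ih, Nat.factorial_succ, mul_comm]

private lemma prod_Ioc_sub (a b : ℕ) : ∏ j ∈ Finset.Ioc a b, (j - a) = (b - a).factorial := by
  rw [← prod_Icc_one_factorial (b - a)]
  refine Finset.prod_nbij' (fun j => j - a) (fun i => i + a) ?_ ?_ ?_ ?_ ?_
  · intro x hx; simp only [Finset.mem_Ioc, Finset.mem_Icc] at *; omega
  · intro x hx; simp only [Finset.mem_Ioc, Finset.mem_Icc] at *; omega
  · intro x hx; simp only [Finset.mem_Ioc] at hx; show x - a + a = x; omega
  · intro x hx; simp only [Finset.mem_Icc] at hx; show x + a - a = x; omega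
  · intro x hx; rfl

private lemma prod_Ico_rev (k : ℕ) : ∏ j ∈ Finset.Ico 1 k, (k - j) = (k - 1).factorial := by
  have hIcc : Finset.Ico 1 k = Finset.Icc 1 (k-1) := by
    ext a; simp only [Finset.mem_Ico, Finset.mem_Icc]; omega
  rw [← prod_Icc_one_factorial (k-1), ← hIcc]
  refine Finset.prod_nbij' (fun j => k - j) (fun i => k - i) ?_ ?_ ?_ ?_ ?_
  · intro x hx; simp only [Finset.mem_Ico] at *; omega
  · intro x hx; simp only [Finset.mem_Ico] at *; omega
  · intro x hx; simp only [Finset.mem_Ico] at hx; show k - (k - x) = x; omega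
  · intro x hx; simp only [Finset.mem_Ico] at hx; show k - (k - x) = x; omega
  · intro x hx; rfl

/-- Let `n ≥ 1`, `P` a finite set, `q : P → {0,…,n}`, `σ : P → {±1}`, and
`m_j = |{p : σ(p)=1, q(p)=j}| − |{p : σ(p)=−1, q(p)=j}|`. If
`∑_{p∈P} σ(p)(-1)^{q(p)} q(p)^i = 0` for all `0 ≤ i ≤ n-1`, then
`m_j = C(n,j) m_0` for all `0 ≤ j ≤ n`. -/
theorem stmt_8 (n : ℕ) (hn : 1 ≤ n) (P : Type*) [Fintype P] [DecidableEq P]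
    (q : P → ℕ) (hq : ∀ p, q p ≤ n) (σ : P → ℤ) (hσ : ∀ p, σ p = 1 ∨ σ p = -1)
    (m : ℕ → ℤ)
    (hm : ∀ j, m j =
      ((Finset.univ.filter fun p : P => σ p = 1 ∧ q p = j).card : ℤ) -
      ((Finset.univ.filter fun p : P => σ p = -1 ∧ q p = j).card : ℤ))
    (h : ∀ i < n, ∑ p : P, σ p * (-1 : ℤ) ^ (q p) * (q p : ℤ) ^ i = 0) :
    ∀ j ≤ n, m j = (n.choose j : ℤ) * m 0 := by
  classical
  -- fiber sums: ∑ σ over fiber of j is m j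
  have hfib : ∀ j : ℕ, ∑ p ∈ Finset.univ.filter (fun p : P => q p = j), σ p = m j := by
    intro j
    rw [hm j, ← Finset.sum_filter_add_sum_filter_not _ (fun p => σ p = 1),
      Finset.filter_filter, Finset.filter_filter]
    have e1 : (Finset.univ.filter fun p : P => q p = j ∧ σ p = 1)
        = Finset.univ.filter fun p : P => σ p = 1 ∧ q p = j := by
      apply Finset.filter_congr; intro p _; simp [and_comm]
    have e2 : (Finset.univ.filter fun p : P => q p = j ∧ ¬ σ p = 1)
        = Finset.univ.filter fun p : P => σ p = -1 ∧ q p = j := by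
      apply Finset.filter_congr; intro p _
      rcases hσ p with h1 | h1 <;> simp [h1]
    rw [e1, e2]
    have hA : ∑ p ∈ (Finset.univ.filter fun p : P => σ p = 1 ∧ q p = j), σ p
        = ((Finset.univ.filter fun p : P => σ p = 1 ∧ q p = j).card : ℤ) := by
      rw [Finset.sum_congr rfl (g := fun _ => (1:ℤ))
        (fun p hp => (Finset.mem_filter.mp hp).2.1), Finset.sum_const]
      simp
    have hB : ∑ p ∈ (Finset.univ.filter fun p : P => σ p = -1 ∧ q p = j), σ p
        = -((Finset.univ.filter fun p : P => σ p = -1 ∧ q p = j).card : ℤ) := by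
      rw [Finset.sum_congr rfl (g := fun _ => (-1:ℤ))
        (fun p hp => (Finset.mem_filter.mp hp).2.1), Finset.sum_const]
      simp
    rw [hA, hB]
    ring
  -- grouping: sums over P become sums over range (n+1)
  have hgroup : ∀ f : ℕ → ℤ,
      ∑ p : P, σ p * (-1 : ℤ) ^ (q p) * f (q p)
        = ∑ j ∈ Finset.range (n+1), (-1 : ℤ)^j * m j * f j := by
    intro f
    rw [← Finset.sum_fiberwise_of_maps_to
      (fun p (_ : p ∈ Finset.univ) => Finset.mem_range.mpr (Nat.lt_succ_of_le (hq p)))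
      (fun p => σ p * (-1 : ℤ) ^ (q p) * f (q p))]
    refine Finset.sum_congr rfl fun j _ => ?_
    rw [Finset.sum_congr rfl (g := fun p => σ p * ((-1 : ℤ)^j * f j))
      (fun p hp => by rw [(Finset.mem_filter.mp hp).2]; ring), ← Finset.sum_mul, hfib j]
    ring
  -- polynomial version of the hypothesis
  have hpoly : ∀ G : Polynomial ℤ, G.natDegree < n →
      ∑ j ∈ Finset.range (n+1), (-1 : ℤ)^j * m j * G.eval (j : ℤ) = 0 := by
    intro G hG
    rw [← hgroup (fun j => G.eval (j : ℤ))]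
    calc ∑ p : P, σ p * (-1 : ℤ) ^ (q p) * G.eval ((q p : ℤ))
        = ∑ p : P, ∑ i ∈ Finset.range n, G.coeff i * (σ p * (-1 : ℤ) ^ (q p) * (q p : ℤ)^i) := by
          refine Finset.sum_congr rfl fun p _ => ?_
          rw [Polynomial.eval_eq_sum_range' hG, Finset.mul_sum]
          exact Finset.sum_congr rfl fun i _ => by ring
      _ = ∑ i ∈ Finset.range n, G.coeff i * ∑ p : P, σ p * (-1 : ℤ) ^ (q p) * (q p : ℤ)^i := by
          rw [Finset.sum_comm]; exact Finset.sum_congr rfl fun i _ => (Finset.mul_sum _ _ _).symm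
      _ = 0 := Finset.sum_eq_zero fun i hi => by
          rw [h i (Finset.mem_range.mp hi), mul_zero]
  intro k hk
  rcases Nat.eq_zero_or_pos k with rfl | hk1
  · simp
  -- main case 1 ≤ k ≤ n
  set S : Finset ℕ := (Finset.Icc 1 n).erase k with hS
  have hkmem : k ∈ Finset.Icc 1 n := Finset.mem_Icc.mpr ⟨hk1, hk⟩
  have hScard : S.card = n - 1 := by
    rw [hS, Finset.card_erase_of_mem hkmem, Nat.card_Icc]; omega
  set G : Polynomial ℤ := ∏ j ∈ S, (X - C (j : ℤ)) with hGdef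
  have hGdeg : G.natDegree < n := by
    rw [hGdef, Polynomial.natDegree_prod _ _ (fun j _ => X_sub_C_ne_zero _)]
    simp only [Polynomial.natDegree_X_sub_C]
    rw [Finset.sum_const, smul_eq_mul, mul_one, hScard]; omega
  have hGeval : ∀ x : ℤ, G.eval x = ∏ j ∈ S, (x - (j : ℤ)) := by
    intro x; rw [hGdef, Polynomial.eval_prod]; simp
  have key := hpoly G hGdeg
  -- split the sum: range (n+1) = insert 0 (insert k S)
  have hins : Finset.range (n+1) = insert 0 (insert k S) := by
    rw [hS, Finset.insert_erase hkmem]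
    ext a; simp [Finset.mem_range, Finset.mem_insert, Finset.mem_Icc]; omega
  have h0ni : (0 : ℕ) ∉ insert k S := by
    simp [hS, Finset.mem_insert, Finset.mem_erase, Finset.mem_Icc]; omega
  have hkni : k ∉ S := Finset.notMem_erase _ _
  rw [hins, Finset.sum_insert h0ni, Finset.sum_insert hkni,
    Finset.sum_eq_zero (fun j hj => by
      rw [hGeval, Finset.prod_eq_zero hj (by simp), mul_zero])] at key
  simp only [pow_zero, one_mul, Nat.cast_zero, add_zero] at key
  -- key : m 0 * G.eval 0 + (-1)^k * m k * G.eval k = 0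
  -- compute evals
  have hE0 : (k : ℤ) * G.eval 0 = (-1 : ℤ)^(n-1) * (n.factorial : ℤ) := by
    have hnat : k * ∏ j ∈ S, j = n.factorial := by
      rw [hS, Finset.mul_prod_erase (Finset.Icc 1 n) (fun x => x) hkmem]
      exact prod_Icc_one_factorial n
    have h2 : (k:ℤ) * ∏ j ∈ S, (j:ℤ) = (n.factorial : ℤ) := by
      rw [← hnat]; push_cast; ring
    rw [hGeval]
    have h1 : ∏ j ∈ S, ((0 : ℤ) - (j:ℤ)) = (-1 : ℤ)^(n-1) * ∏ j ∈ S, (j : ℤ) := by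
      rw [← hScard, ← Finset.prod_const (-1 : ℤ), ← Finset.prod_mul_distrib]
      exact Finset.prod_congr rfl fun j _ => by ring
    calc (k:ℤ) * ∏ j ∈ S, ((0:ℤ) - (j:ℤ))
        = (-1:ℤ)^(n-1) * ((k:ℤ) * ∏ j ∈ S, (j:ℤ)) := by rw [h1]; ring
      _ = (-1:ℤ)^(n-1) * (n.factorial : ℤ) := by rw [h2]
  have hSsplit : S = Finset.Ico 1 k ∪ Finset.Ioc k n := by
    ext a
    simp only [hS, Finset.mem_erase, Finset.mem_Icc, Finset.mem_union, Finset.mem_Ico,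
      Finset.mem_Ioc]
    omega
  have hdisj : Disjoint (Finset.Ico 1 k) (Finset.Ioc k n) := by
    rw [Finset.disjoint_left]; intro a; simp; omega
  have hEk : G.eval (k : ℤ)
      = (-1 : ℤ)^(n-k) * (((k-1).factorial : ℤ) * ((n-k).factorial : ℤ)) := by
    rw [hGeval, hSsplit, Finset.prod_union hdisj]
    have h1 : ∏ j ∈ Finset.Ico 1 k, ((k:ℤ) - (j:ℤ)) = ((k-1).factorial : ℤ) := by
      rw [← prod_Ico_rev k, Nat.cast_prod]
      refine Finset.prod_congr rfl fun j hj => ?_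
      have := (Finset.mem_Ico.mp hj).2
      push_cast [Nat.cast_sub (le_of_lt this)]; ring
    have h2 : ∏ j ∈ Finset.Ioc k n, ((k:ℤ) - (j:ℤ))
        = (-1 : ℤ)^(n-k) * ((n-k).factorial : ℤ) := by
      have : ∏ j ∈ Finset.Ioc k n, ((k:ℤ) - (j:ℤ))
          = (-1:ℤ)^(Finset.Ioc k n).card * ∏ j ∈ Finset.Ioc k n, ((j:ℤ) - (k:ℤ)) := by
        rw [← Finset.prod_const (-1 : ℤ), ← Finset.prod_mul_distrib]
        exact Finset.prod_congr rfl fun j _ => by ring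
      rw [this, Nat.card_Ioc, ← prod_Ioc_sub k n, Nat.cast_prod]
      congr 1
      refine Finset.prod_congr rfl fun j hj => ?_
      have := (Finset.mem_Ioc.mp hj).1
      push_cast [Nat.cast_sub (le_of_lt this)]; ring
    rw [h1, h2]; ring
  -- finish: multiply key by k
  have key2 : (k : ℤ) * (m 0 * G.eval 0) + (k : ℤ) * ((-1)^k * m k * G.eval (k : ℤ)) = 0 := by
    rw [← mul_add, key, mul_zero]
  rw [hEk, show (k:ℤ) * (m 0 * G.eval 0) = m 0 * ((k:ℤ) * G.eval 0) by ring, hE0] at key2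
  have hkfac : (k : ℤ) * ((k-1).factorial : ℤ) = (k.factorial : ℤ) := by
    rw [← Nat.cast_mul]
    congr 1
    rw [show k = (k-1)+1 by omega, Nat.factorial_succ]
    simp
  have key3 : (-1:ℤ)^(n-1) * (m 0 * (n.factorial:ℤ))
      + (-1:ℤ)^k * (-1:ℤ)^(n-k) * (m k * ((k.factorial:ℤ) * ((n-k).factorial:ℤ))) = 0 := by
    rw [← hkfac]
    linear_combination key2
  have hsgn : (-1:ℤ)^k * (-1:ℤ)^(n-k) = (-1:ℤ)^n := by
    rw [← pow_add]; congr 1; omega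
  have hsgn2 : (-1:ℤ)^(n-1) * (-1:ℤ) = (-1:ℤ)^n := by
    rw [← pow_succ]; congr 1; omega
  rw [hsgn] at key3
  have hne0 : ((-1:ℤ)^n) ≠ 0 := pow_ne_zero _ (by norm_num)
  have h5 : (-1:ℤ)^(n-1) = -(-1:ℤ)^n := by rw [← hsgn2]; ring
  rw [h5] at key3
  have key4 : m k * ((k.factorial:ℤ) * ((n-k).factorial:ℤ)) - m 0 * (n.factorial:ℤ) = 0 := by
    have hz : (-1:ℤ)^n * (m k * ((k.factorial:ℤ) * ((n-k).factorial:ℤ))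
        - m 0 * (n.factorial:ℤ)) = 0 := by linear_combination key3
    exact (mul_eq_zero.mp hz).resolve_left hne0
  have hfaceq : (n.factorial : ℤ)
      = (n.choose k : ℤ) * ((k.factorial:ℤ) * ((n-k).factorial:ℤ)) := by
    rw [← Nat.cast_mul, ← Nat.cast_mul]
    congr 1
    rw [← Nat.choose_mul_factorial_mul_factorial hk, mul_assoc]
  have hne : ((k.factorial:ℤ) * ((n-k).factorial:ℤ)) ≠ 0 := by positivity
  have hz2 : (m k - (n.choose k : ℤ) * m 0) * ((k.factorial:ℤ) * ((n-k).factorial:ℤ)) = 0 := by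
    linear_combination key4 + m 0 * hfaceq
  have := (mul_eq_zero.mp hz2).resolve_right hne
  linarith
end

section
/- Let n ≥ 1, let P be a finite set with maps q : P → {0,…,n} and σ : P → {±1} satisfying the ABBV identities ∑_{p∈P} σ(p)(-1)^{q(p)} e_i(1^{n-q(p)}, (-1)^{q(p)}) = 0 for all 0 ≤ i ≤ n-1. Then the multiset {(q(p), σ(p)) : p ∈ P} is a disjoint union of copies of: the multiset {(j,+1) with multiplicity C(n,j)}_{j=0}^n, its sign reversal, and pairs {(j,+1),(j,−1)}. -/
/-- The multiset of fixed-point data of `(S²)^n`: `C(n,j)` copies of `(j, ε)` for each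
`0 ≤ j ≤ n`, where `ε : ℤ` is the common sign. -/
def sphereData (n : ℕ) (ε : ℤ) : Multiset (ℕ × ℤ) :=
  ∑ j ∈ Finset.range (n + 1), Multiset.replicate (n.choose j) (j, ε)

/-- The fixed-point data of a representation sphere `S(V_j ⊕ ℝ)`: the pair
`{(j,+1), (j,−1)}`. -/
def pairData (j : ℕ) : Multiset (ℕ × ℤ) := {(j, 1), (j, -1)}

/-!
By Vieta, `(-1)^j e_i(1^{n-j}, (-1)^j)` is the coefficient of `X^{n-i}` in
`(X + 1)^{n-j} (1 - X)^j`, so the ABBV identities say that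
`∑ₚ σ(p) (X + 1)^{n-q(p)} (1 - X)^{q(p)}` is a constant `c`. The substitution
`X = (1 - y)/(1 + y)` turns this into `∑ₚ σ(p) y^{q(p)} = (c / 2^n) (1 + y)^n`, so the signed
number of points with `q = j` is `d₀ C(n, j)`, where `d₀` is the one with `q = 0`. Taking `|d₀|`
copies of `(S²)^n` with the sign of `d₀`, what remains at each level `j` has as many `+1`s as
`-1`s, and splits into pairs.
-/

open Polynomial Finset

section Polynomial

variable {R : Type*}

noncomputable def abbvPoly [CommRing R] (n j : ℕ) : R[X] := (X + 1) ^ (n - j) * (1 - X) ^ j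

theorem neg_one_pow_mul_esymm_eq_coeff_abbvPoly [CommRing R] {n j i : ℕ} (hj : j ≤ n)
    (hi : i ≤ n) :
    (-1) ^ j * (Multiset.replicate (n - j) (1 : R) + Multiset.replicate j (-1)).esymm i =
      (abbvPoly n j : R[X]).coeff (n - i) := by
  set s := Multiset.replicate (n - j) (1 : R) + Multiset.replicate j (-1)
  have hcard : Multiset.card s = n := by simp [s, Nat.sub_add_cancel hj]
  have hvieta := Multiset.prod_X_add_C_coeff s (k := n - i) (by omega)
  rw [hcard, Nat.sub_sub_self hi] at hvieta
  have hflip : (1 - X : R[X]) ^ j = C ((-1) ^ j) * (X - 1) ^ j := by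
    rw [map_pow, ← mul_pow, map_neg, map_one, neg_one_mul, neg_sub]
  rw [abbvPoly, hflip, mul_left_comm, coeff_C_mul, ← hvieta]
  simp [s, Multiset.prod_replicate, sub_eq_add_neg]

theorem natDegree_abbvPoly_le [CommRing R] {n j : ℕ} (hj : j ≤ n) :
    (abbvPoly n j : R[X]).natDegree ≤ n := by
  unfold abbvPoly
  calc _ ≤ (n - j) * 1 + j * 1 := by
        refine natDegree_mul_le_of_le (natDegree_pow_le_of_le _ ?_) (natDegree_pow_le_of_le _ ?_)
        · exact natDegree_add_le_of_degree_le natDegree_X_le (natDegree_one.trans_le zero_le_one)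
        · exact natDegree_sub_le_of_le (natDegree_one.trans_le zero_le_one) natDegree_X_le
    _ = n := by omega

theorem eval_abbvPoly_div [Field R] {n j : ℕ} (hj : j ≤ n) {y : R} (hy : 1 + y ≠ 0) :
    (abbvPoly n j : R[X]).eval ((1 - y) / (1 + y)) = (2 / (1 + y)) ^ n * y ^ j := by
  have h₁ : (1 - y) / (1 + y) + 1 = 2 / (1 + y) := by field_simp; ring
  have h₂ : 1 - (1 - y) / (1 + y) = 2 / (1 + y) * y := by field_simp; ring
  simp only [abbvPoly, eval_mul, eval_pow, eval_add, eval_sub, eval_X, eval_one, h₁, h₂,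
    mul_pow, ← mul_assoc, pow_sub_mul_pow _ hj]

theorem exists_sum_C_mul_X_pow_eq_of_coeff_abbvPoly [Field R] [CharZero R] {ι : Type*}
    {n : ℕ} (s : Finset ι) (w : ι → R) (k : ι → ℕ) (hk : ∀ i ∈ s, k i ≤ n)
    (hcoeff : ∀ m, 1 ≤ m → m ≤ n → (∑ i ∈ s, C (w i) * abbvPoly n (k i)).coeff m = 0) :
    ∃ e : R, ∑ i ∈ s, C (w i) * X ^ k i = C e * (X + 1) ^ n := by
  set A := ∑ i ∈ s, C (w i) * abbvPoly n (k i)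
  have hdeg : A.natDegree ≤ n := natDegree_sum_le_of_forall_le _ _ fun i hi =>
    natDegree_C_mul_le _ _ |>.trans (natDegree_abbvPoly_le (hk i hi))
  have hA : A = C (A.coeff 0) := by
    refine eq_C_of_natDegree_le_zero (natDegree_le_iff_coeff_eq_zero.2 fun m hm => ?_)
    by_cases hmn : m ≤ n
    · exact hcoeff m hm hmn
    · exact coeff_eq_zero_of_natDegree_lt (by omega)
  refine ⟨A.coeff 0 / 2 ^ n, eq_of_infinite_eval_eq _ _
    ((Set.finite_singleton (-1)).infinite_compl.mono fun y hy => ?_)⟩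
  have h1y : 1 + y ≠ 0 := by
    rw [add_comm, Ne, add_eq_zero_iff_eq_neg]; exact hy
  have heval := congrArg (eval ((1 - y) / (1 + y))) hA
  rw [eval_C] at heval
  have hsum : (∑ i ∈ s, w i * y ^ k i) * (2 / (1 + y)) ^ n = A.coeff 0 := by
    rw [← heval, sum_mul]
    simp only [A, eval_finsetSum]
    exact sum_congr rfl fun i hi => by rw [eval_mul, eval_C, eval_abbvPoly_div (hk i hi) h1y]; ring
  simp only [Set.mem_ofPred_eq, eval_finsetSum, eval_mul, eval_C, eval_pow, eval_X, eval_add,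
    eval_one]
  rw [← hsum, add_comm y 1]
  field_simp
  rw [mul_assoc, ← mul_pow, div_mul_cancel₀ _ h1y]

end Polynomial

theorem eq_sum_replicate_count {n : ℕ} (M : Multiset (ℕ × ℤ))
    (hM : ∀ x ∈ M, x.1 ≤ n ∧ (x.2 = 1 ∨ x.2 = -1)) :
    M = ∑ j ∈ range (n + 1), (Multiset.replicate (M.count (j, 1)) (j, 1) +
      Multiset.replicate (M.count (j, -1)) (j, -1)) := by
  ext ⟨i, s⟩
  simp only [Multiset.count_sum', Multiset.count_add, Multiset.count_replicate, Prod.mk.injEq,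
    sum_add_distrib, ite_and, sum_ite_eq', mem_range, Nat.lt_succ_iff]
  by_cases hx : (i, s) ∈ M
  · obtain ⟨hi, rfl | rfl⟩ := hM _ hx <;> simp [hi]
  · rw [Multiset.count_eq_zero_of_notMem hx]
    split_ifs <;> simp_all

theorem smul_sphereData_add_sum_smul_pairData (n a b : ℕ) (c : ℕ → ℕ) :
    a • sphereData n 1 + b • sphereData n (-1) + ∑ j ∈ range (n + 1), c j • pairData j =
      ∑ j ∈ range (n + 1), (Multiset.replicate (a * n.choose j + c j) (j, 1) +
        Multiset.replicate (b * n.choose j + c j) (j, -1)) := by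
  have hpair (j : ℕ) : pairData j = Multiset.replicate 1 (j, 1) + Multiset.replicate 1 (j, -1) :=
    rfl
  simp only [sphereData, hpair, smul_sum, ← sum_add_distrib, smul_add, Multiset.nsmul_replicate,
    mul_one, Multiset.replicate_add]
  exact sum_congr rfl fun j _ => by abel

theorem exists_eq_sphereData_add_pairData {n : ℕ} (M : Multiset (ℕ × ℤ))
    (hM : ∀ x ∈ M, x.1 ≤ n ∧ (x.2 = 1 ∨ x.2 = -1)) (e : ℤ)
    (hcount : ∀ j ≤ n, (M.count (j, 1) : ℤ) - M.count (j, -1) = e * n.choose j) :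
    ∃ (a b : ℕ) (c : ℕ → ℕ), M = a • sphereData n 1 + b • sphereData n (-1) +
      ∑ j ∈ range (n + 1), c j • pairData j := by
  obtain ⟨a, rfl | rfl⟩ := Int.eq_nat_or_neg e
  · refine ⟨a, 0, fun j => M.count (j, -1), ?_⟩
    rw [smul_sphereData_add_sum_smul_pairData]
    refine (eq_sum_replicate_count M hM).trans (sum_congr rfl fun j hj => ?_)
    have := hcount j (Nat.lt_succ_iff.1 (mem_range.1 hj))
    congr 2
    · zify; linarith
    · simp
  · refine ⟨0, a, fun j => M.count (j, 1), ?_⟩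
    rw [smul_sphereData_add_sum_smul_pairData]
    refine (eq_sum_replicate_count M hM).trans (sum_congr rfl fun j hj => ?_)
    have := hcount j (Nat.lt_succ_iff.1 (mem_range.1 hj))
    congr 2
    · simp
    · zify; linarith

theorem count_map_sub_count_map {ι : Type*} (s : Finset ι) (q : ι → ℕ) (σ : ι → ℤ)
    (hσ : ∀ i, σ i = 1 ∨ σ i = -1) (j : ℕ) :
    ((s.val.map fun i => (q i, σ i)).count (j, 1) : ℤ) -
        (s.val.map fun i => (q i, σ i)).count (j, -1) =
      ∑ i ∈ s, if q i = j then σ i else 0 := by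
  simp only [Multiset.count_map, ← Finset.filter_val, Finset.card_val, Finset.natCast_card_filter,
    ← sum_sub_distrib]
  refine sum_congr rfl fun i _ => ?_
  rcases hσ i with h | h <;> by_cases hq : q i = j <;> simp [h, hq, eq_comm (a := j)]

theorem stmt_12_general (n : ℕ) (P : Type*) [Fintype P]
    (q : P → ℕ) (hq : ∀ p, q p ≤ n) (σ : P → ℤ) (hσ : ∀ p, σ p = 1 ∨ σ p = -1)
    (habbv : ∀ i < n, ∑ p : P, (σ p : ℚ) * (-1 : ℚ) ^ (q p) *
      (Multiset.replicate (n - q p) (1 : ℚ) + Multiset.replicate (q p) (-1 : ℚ)).esymm i = 0) :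
    ∃ (a b : ℕ) (c : ℕ → ℕ),
      (Finset.univ.val.map fun p : P => (q p, σ p)) =
        a • sphereData n 1 + b • sphereData n (-1) +
          ∑ j ∈ Finset.range (n + 1), c j • pairData j := by
  obtain ⟨e, he⟩ := exists_sum_C_mul_X_pow_eq_of_coeff_abbvPoly univ (fun p => (σ p : ℚ)) q
    (fun p _ => hq p) fun m _ hmn => by
      rw [finsetSum_coeff, ← habbv (n - m) (by omega)]
      refine sum_congr rfl fun p _ => ?_
      rw [coeff_C_mul, mul_assoc, neg_one_pow_mul_esymm_eq_coeff_abbvPoly (hq p) (Nat.sub_le n m),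
        Nat.sub_sub_self hmn]
  have hcoeff (j : ℕ) : (∑ p, if q p = j then (σ p : ℚ) else 0) = e * n.choose j := by
    simpa [finsetSum_coeff, coeff_C_mul_X_pow, coeff_X_add_one_pow, eq_comm] using
      congrArg (coeff · j) he
  have he0 : e = ∑ p, if q p = 0 then (σ p : ℚ) else 0 := by simpa using (hcoeff 0).symm
  refine exists_eq_sphereData_add_pairData _ (by simp [hq, hσ]) (∑ p, if q p = 0 then σ p else 0)
    fun j _ => ?_
  rw [count_map_sub_count_map univ q σ hσ]
  exact_mod_cast he0 ▸ hcoeff j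

/-- Let `n ≥ 1` and let `(q, σ)` be semifree abstract isotropy data on a finite set `P`
satisfying the ABBV identities
`∑_{p∈P} σ(p)(-1)^{q(p)} e_i(1^{n-q(p)}, (-1)^{q(p)}) = 0` for all `0 ≤ i ≤ n-1`. Then
the multiset `{(q(p), σ(p)) : p ∈ P}` is a disjoint union of copies of the data of
`(S²)^n`, its sign reversal, and the pairs `{(j,+1),(j,−1)}`. -/
theorem stmt_12 (n : ℕ) (hn : 1 ≤ n) (P : Type*) [Fintype P]
    (q : P → ℕ) (hq : ∀ p, q p ≤ n) (σ : P → ℤ) (hσ : ∀ p, σ p = 1 ∨ σ p = -1)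
    (habbv : ∀ i < n, ∑ p : P, (σ p : ℚ) * (-1 : ℚ) ^ (q p) *
      (Multiset.replicate (n - q p) (1 : ℚ) + Multiset.replicate (q p) (-1 : ℚ)).esymm i = 0) :
    ∃ (a b : ℕ) (c : ℕ → ℕ),
      (Finset.univ.val.map fun p : P => (q p, σ p)) =
        a • sphereData n 1 + b • sphereData n (-1) +
          ∑ j ∈ Finset.range (n + 1), c j • pairData j :=
  stmt_12_general n P q hq σ hσ habbv
end
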